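/- Let 0 < c ≤ 1 and 0 < ω < c(c+1)/2, Q(x) = √2/cosh(x). There exists μ > 0 such that for all z ∈ H¹(ℝ, ℝ), ∫ (|z'|² + c²|z|² - ωQ²|z|²) dx ≥ μ ‖z‖_{H¹}². -/

import Mathlib

/-!
Since `tanh' = 1 - tanh² = cosh⁻²`, integrating by parts gives `∫ 2 tanh z z' = -∫ z² / cosh²`, so
expanding `0 ≤ ∫ (z' + c tanh z)²` yields the Hardy-type inequality
`(c + c²) ∫ z² / cosh² ≤ ∫ z'² + c² ∫ z²`. As `ωQ² = 2ω / cosh²` with `2ω < c(c+1)`, the potential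
term costs at most the fraction `2ω / (c(c+1)) < 1` of `∫ z'² + c² ∫ z²`, and for `c ≤ 1` the latter
dominates `c² ‖z‖²_{H¹}`.
-/

open Real MeasureTheory

noncomputable def Q (x : ℝ) : ℝ := Real.sqrt 2 / Real.cosh x

namespace Real

lemma inv_cosh_sq_eq_one_sub_tanh_sq (x : ℝ) : (cosh x ^ 2)⁻¹ = 1 - tanh x ^ 2 := by
  have := (cosh_pos x).ne'
  rw [tanh_eq_sinh_div_cosh]
  field_simp
  linarith [cosh_sq x]

lemma hasDerivAt_tanh (x : ℝ) : HasDerivAt tanh (cosh x ^ 2)⁻¹ x := by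
  have h := (hasDerivAt_sinh x).div (hasDerivAt_cosh x) (cosh_pos x).ne'
  rw [← sq, ← sq, cosh_sq_sub_sinh_sq, one_div] at h
  exact h.congr_of_eventuallyEq (.of_forall tanh_eq_sinh_div_cosh)

lemma continuous_tanh : Continuous tanh :=
  continuous_iff_continuousAt.2 fun x => (hasDerivAt_tanh x).continuousAt

lemma norm_inv_cosh_sq_le_one (x : ℝ) : ‖(cosh x ^ 2)⁻¹‖ ≤ 1 := by
  rw [norm_inv, norm_pow, norm_eq_abs, abs_of_pos (cosh_pos x)]
  exact inv_le_one_of_one_le₀ (one_le_pow₀ (one_le_cosh x))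

end Real

lemma Q_sq (x : ℝ) : Q x ^ 2 = 2 * (cosh x ^ 2)⁻¹ := by
  rw [Q, div_pow, sq_sqrt zero_le_two, div_eq_mul_inv]

lemma MeasureTheory.Integrable.tanh_mul {f : ℝ → ℝ} (hf : Integrable f) : Integrable (fun x => tanh x * f x) :=
  hf.bdd_mul continuous_tanh.aestronglyMeasurable
    (.of_forall fun x => (abs_tanh_lt_one x).le)

lemma MeasureTheory.Integrable.inv_cosh_sq_mul {f : ℝ → ℝ} (hf : Integrable f) :
    Integrable (fun x => (cosh x ^ 2)⁻¹ * f x) :=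
  hf.bdd_mul
    ((continuous_cosh.pow 2).inv₀ fun x => pow_ne_zero 2 (cosh_pos x).ne').aestronglyMeasurable
    (.of_forall norm_inv_cosh_sq_le_one)

section Hardy

variable {z : ℝ → ℝ}

lemma integral_tanh_mul_deriv_sq (hz : Differentiable ℝ z) (hz2 : Integrable fun x => z x ^ 2)
    (hzz' : Integrable fun x => z x * deriv z x) :
    ∫ x, tanh x * (2 * (z x * deriv z x)) = -∫ x, (cosh x ^ 2)⁻¹ * z x ^ 2 :=
  integral_mul_deriv_eq_deriv_mul_of_integrable (u := tanh) (v := fun x => z x ^ 2)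
    (fun x _ => hasDerivAt_tanh x)
    (fun x _ => ((hz x).hasDerivAt.pow 2).congr_deriv (by ring))
    (hzz'.const_mul 2).tanh_mul hz2.inv_cosh_sq_mul hz2.tanh_mul

theorem hardy_inv_cosh_sq (c : ℝ) (hz : Differentiable ℝ z) (hz2 : MemLp z 2 volume)
    (hdz2 : MemLp (deriv z) 2 volume) :
    (c + c ^ 2) * ∫ x, (cosh x ^ 2)⁻¹ * z x ^ 2 ≤ (∫ x, deriv z x ^ 2) + c ^ 2 * ∫ x, z x ^ 2 := by
  have hA := hdz2.integrable_sq
  have hB := hz2.integrable_sq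
  have hzz' : Integrable fun x => z x * deriv z x := hz2.integrable_mul hdz2
  have hsq (x : ℝ) : (deriv z x + c * tanh x * z x) ^ 2 = deriv z x ^ 2 + c ^ 2 * z x ^ 2
      - c ^ 2 * ((cosh x ^ 2)⁻¹ * z x ^ 2) + c * (tanh x * (2 * (z x * deriv z x))) := by
    rw [inv_cosh_sq_eq_one_sub_tanh_sq]; ring
  have h0 : 0 ≤ ∫ x, (deriv z x + c * tanh x * z x) ^ 2 := integral_nonneg fun x => sq_nonneg _
  have hAB : Integrable fun x => deriv z x ^ 2 + c ^ 2 * z x ^ 2 := hA.add (hB.const_mul _)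
  have hABS : Integrable fun x => deriv z x ^ 2 + c ^ 2 * z x ^ 2
      - c ^ 2 * ((cosh x ^ 2)⁻¹ * z x ^ 2) := hAB.sub (hB.inv_cosh_sq_mul.const_mul _)
  simp only [hsq] at h0
  rw [integral_add hABS ((hzz'.const_mul 2).tanh_mul.const_mul _),
    integral_sub hAB (hB.inv_cosh_sq_mul.const_mul _), integral_add hA (hB.const_mul _),
    integral_const_mul, integral_const_mul, integral_const_mul,
    integral_tanh_mul_deriv_sq hz hB hzz'] at h0
  linear_combination h0

end Hardy

theorem stmt12 (c ω : ℝ) (hc : 0 < c) (hc1 : c ≤ 1) (hω : 0 < ω)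
    (hω' : ω < c * (c + 1) / 2) :
    ∃ μ : ℝ, 0 < μ ∧
      ∀ z : ℝ → ℝ, Differentiable ℝ z →
        MemLp z 2 (volume : Measure ℝ) →
        MemLp (deriv z) 2 (volume : Measure ℝ) →
        (∫ x : ℝ, ((deriv z x) ^ 2 + c ^ 2 * (z x) ^ 2 - ω * (Q x) ^ 2 * (z x) ^ 2))
          ≥ μ * ∫ x : ℝ, ((z x) ^ 2 + (deriv z x) ^ 2) := by
  have hK : 0 < c * (c + 1) - 2 * ω := by linarith
  refine ⟨(c * (c + 1) - 2 * ω) * c / (c + 1), by positivity, fun z hz hz2 hdz2 => ?_⟩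
  have hA := hdz2.integrable_sq
  have hB := hz2.integrable_sq
  have hS := hB.inv_cosh_sq_mul
  have hardy := hardy_inv_cosh_sq c hz hz2 hdz2
  have hQ (x : ℝ) : deriv z x ^ 2 + c ^ 2 * z x ^ 2 - ω * Q x ^ 2 * z x ^ 2
      = deriv z x ^ 2 + c ^ 2 * z x ^ 2 - 2 * ω * ((cosh x ^ 2)⁻¹ * z x ^ 2) := by
    rw [Q_sq]; ring
  have hAB : Integrable fun x => deriv z x ^ 2 + c ^ 2 * z x ^ 2 := hA.add (hB.const_mul _)
  simp only [hQ]
  rw [integral_sub hAB (hS.const_mul _), integral_add hA (hB.const_mul _),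
    integral_add hB hA, integral_const_mul, integral_const_mul]
  set A := ∫ x, deriv z x ^ 2
  set B := ∫ x, z x ^ 2
  set S := ∫ x, (cosh x ^ 2)⁻¹ * z x ^ 2
  have hA0 : 0 ≤ A := integral_nonneg fun x => sq_nonneg _
  rw [ge_iff_le, div_mul_eq_mul_div, div_le_iff₀ (by positivity)]
  refine le_of_mul_le_mul_left ?_ hc
  -- `2ω · hardy` trades the potential for `2ω (A + c²B)`; then `(A + c²B) ≥ c² (A + B)` as `c ≤ 1`
  nlinarith [mul_le_mul_of_nonneg_left hardy (by positivity : (0 : ℝ) ≤ 2 * ω),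
    mul_nonneg (mul_nonneg hK.le hA0) (sub_nonneg.2 (by nlinarith : c ^ 2 ≤ 1))]
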